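/- Let H1 and H2 be finite loopless hypergraphs. Then the chromatic number of their Cartesian product satisfies χ(H1□H2) = max{χ(H1), χ(H2)}, and the strong chromatic number satisfies χ_s(H1□H2) = max{χ_s(H1), χ_s(H2)}. -/

import Mathlib

/-!
Basic definitions: finite hypergraphs (a finite nonempty vertex set `V`, given by
`[Fintype V] [Nonempty V]`, together with a set of nonempty edges), walks, distance,
connectedness, simplicity, rank, colorings, Helly property, covers,
the various hypergraph products, 2-sections, and graph products.
-/

/-- A hypergraph on a vertex type `V`: a collection of nonempty edges (finite subsets of `V`). -/
structure FinHypergraph (V : Type*) where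
  edges : Set (Finset V)
  nonempty_edges : ∀ e ∈ edges, e.Nonempty

namespace FinHypergraph

variable {V V₁ V₂ : Type*}

/-- There is a walk of length `n` from `u` to `v`: a sequence of vertices `w 0, …, w n`
and edges `f 1, …, f n` with consecutive vertices distinct and both contained
in the corresponding edge. -/
def HasWalk (H : FinHypergraph V) (u v : V) (n : ℕ) : Prop :=
  ∃ (w : Fin (n + 1) → V) (f : Fin n → Finset V),
    w 0 = u ∧ w (Fin.last n) = v ∧
      ∀ i : Fin n, f i ∈ H.edges ∧ w i.castSucc ≠ w i.succ ∧
        w i.castSucc ∈ f i ∧ w i.succ ∈ f i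

/-- The distance between two vertices: the minimum length of a walk joining them,
`⊤ = ∞` if there is none. -/
noncomputable def dist (H : FinHypergraph V) (u v : V) : ℕ∞ :=
  sInf {x : ℕ∞ | ∃ n : ℕ, x = n ∧ H.HasWalk u v n}

/-- A hypergraph is connected if any two vertices are joined by a walk. -/
def Connected (H : FinHypergraph V) : Prop := ∀ u v : V, ∃ n, H.HasWalk u v n

/-- A hypergraph is simple if every edge has at least two vertices and
no edge is contained in another edge. -/
def Simple (H : FinHypergraph V) : Prop :=
  (∀ e ∈ H.edges, 2 ≤ e.card) ∧ ∀ e ∈ H.edges, ∀ f ∈ H.edges, e ⊆ f → e = f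

/-- A hypergraph is loopless if every edge has at least two vertices. -/
def Loopless (H : FinHypergraph V) : Prop := ∀ e ∈ H.edges, 2 ≤ e.card

/-- The rank: the maximum cardinality of an edge. -/
noncomputable def rank (H : FinHypergraph V) : ℕ := sSup (Finset.card '' H.edges)

/-- The anti-rank: the minimum cardinality of an edge. -/
noncomputable def antirank (H : FinHypergraph V) : ℕ := sInf (Finset.card '' H.edges)

/-- A proper coloring: no color class contains an edge. -/
def IsProperColoring (H : FinHypergraph V) {k : ℕ} (c : V → Fin k) : Prop :=
  ∀ e ∈ H.edges, ∀ i : Fin k, ¬ ∀ v ∈ e, c v = i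

/-- A proper strong coloring: a proper coloring in which the vertices of every
edge receive pairwise distinct colors. -/
def IsStrongColoring (H : FinHypergraph V) {k : ℕ} (c : V → Fin k) : Prop :=
  H.IsProperColoring c ∧ ∀ e ∈ H.edges, ∀ u ∈ e, ∀ v ∈ e, u ≠ v → c u ≠ c v

/-- The chromatic number: the least `k` admitting a proper `k`-coloring. -/
noncomputable def chromaticNumber (H : FinHypergraph V) : ℕ :=
  sInf {k : ℕ | ∃ c : V → Fin k, H.IsProperColoring c}

/-- The strong chromatic number: the least `k` admitting a proper strong `k`-coloring. -/
noncomputable def strongChromaticNumber (H : FinHypergraph V) : ℕ :=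
  sInf {k : ℕ | ∃ c : V → Fin k, H.IsStrongColoring c}

/-- The Helly property: every intersecting family of edges is a star. -/
def Helly (H : FinHypergraph V) : Prop :=
  ∀ E' ⊆ H.edges, (∀ e ∈ E', ∀ f ∈ E', ∃ x, x ∈ e ∧ x ∈ f) → ∃ v, ∀ e ∈ E', v ∈ e

/-- The covering number: the minimum cardinality of a set of vertices meeting every edge. -/
noncomputable def coverNumber (H : FinHypergraph V) : ℕ :=
  sInf {k : ℕ | ∃ T : Finset V, T.card = k ∧ ∀ e ∈ H.edges, ∃ v ∈ T, v ∈ e}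

/-- The Cartesian product of hypergraphs. -/
def cartProd (H₁ : FinHypergraph V₁) (H₂ : FinHypergraph V₂) : FinHypergraph (V₁ × V₂) where
  edges := {E | (∃ x, ∃ f ∈ H₂.edges, E = {x} ×ˢ f) ∨ ∃ e ∈ H₁.edges, ∃ y, E = e ×ˢ {y}}
  nonempty_edges := by
    rintro E (⟨x, f, hf, rfl⟩ | ⟨e, he, y, rfl⟩)
    · exact (Finset.singleton_nonempty x).product (H₂.nonempty_edges f hf)
    · exact (H₁.nonempty_edges e he).product (Finset.singleton_nonempty y)

section Products

variable [DecidableEq V₁] [DecidableEq V₂]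

/-- The minimal-rank-preserving direct product `H₁ ×̌ H₂`. -/
def minDirProd (H₁ : FinHypergraph V₁) (H₂ : FinHypergraph V₂) : FinHypergraph (V₁ × V₂) where
  edges := {E | ∃ e₁ ∈ H₁.edges, ∃ e₂ ∈ H₂.edges,
    E ⊆ e₁ ×ˢ e₂ ∧ E.card = min e₁.card e₂.card ∧
      (E.image Prod.fst).card = min e₁.card e₂.card ∧
      (E.image Prod.snd).card = min e₁.card e₂.card}
  nonempty_edges := by
    rintro E ⟨e₁, h₁, e₂, h₂, -, hc, -, -⟩
    rw [← Finset.card_pos, hc]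
    exact lt_min (Finset.card_pos.mpr (H₁.nonempty_edges e₁ h₁))
      (Finset.card_pos.mpr (H₂.nonempty_edges e₂ h₂))

/-- The maximal-rank-preserving direct product `H₁ ×̂ H₂`. -/
def maxDirProd (H₁ : FinHypergraph V₁) (H₂ : FinHypergraph V₂) : FinHypergraph (V₁ × V₂) where
  edges := {E | ∃ e₁ ∈ H₁.edges, ∃ e₂ ∈ H₂.edges,
    E ⊆ e₁ ×ˢ e₂ ∧ E.card = max e₁.card e₂.card ∧
      E.image Prod.fst = e₁ ∧ E.image Prod.snd = e₂}
  nonempty_edges := by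
    rintro E ⟨e₁, h₁, e₂, h₂, -, hc, -, -⟩
    rw [← Finset.card_pos, hc]
    exact lt_max_iff.mpr (Or.inl (Finset.card_pos.mpr (H₁.nonempty_edges e₁ h₁)))

/-- The non-rank-preserving direct product `H₁ ×̃ H₂`. -/
def nrDirProd (H₁ : FinHypergraph V₁) (H₂ : FinHypergraph V₂) : FinHypergraph (V₁ × V₂) where
  edges := {E | ∃ e ∈ H₁.edges, ∃ f ∈ H₂.edges, ∃ x ∈ e, ∃ y ∈ f,
    E = insert (x, y) ((e.erase x) ×ˢ (f.erase y))}
  nonempty_edges := by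
    rintro E ⟨e, -, f, -, x, -, y, -, rfl⟩
    exact Finset.insert_nonempty _ _

/-- The normal product `H₁ ⊠̌ H₂`: union of the Cartesian product edges and the
minimal-rank-preserving direct product edges. -/
def normalProd (H₁ : FinHypergraph V₁) (H₂ : FinHypergraph V₂) : FinHypergraph (V₁ × V₂) where
  edges := (H₁.cartProd H₂).edges ∪ (H₁.minDirProd H₂).edges
  nonempty_edges := by
    rintro E (h | h)
    · exact (H₁.cartProd H₂).nonempty_edges E h
    · exact (H₁.minDirProd H₂).nonempty_edges E h

/-- The strong product `H₁ ⊠̂ H₂`: union of the Cartesian product edges and the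
maximal-rank-preserving direct product edges. -/
def strongProd (H₁ : FinHypergraph V₁) (H₂ : FinHypergraph V₂) : FinHypergraph (V₁ × V₂) where
  edges := (H₁.cartProd H₂).edges ∪ (H₁.maxDirProd H₂).edges
  nonempty_edges := by
    rintro E (h | h)
    · exact (H₁.cartProd H₂).nonempty_edges E h
    · exact (H₁.maxDirProd H₂).nonempty_edges E h

/-- The lexicographic product `H₁ ∘ H₂`. -/
def lexProd (H₁ : FinHypergraph V₁) (H₂ : FinHypergraph V₂) : FinHypergraph (V₁ × V₂) where
  edges := {E | (E.image Prod.fst ∈ H₁.edges ∧ (E.image Prod.fst).card = E.card) ∨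
    ∃ x, ∃ e₂ ∈ H₂.edges, E = {x} ×ˢ e₂}
  nonempty_edges := by
    rintro E (⟨h₁, hc⟩ | ⟨x, e₂, h₂, rfl⟩)
    · rw [← Finset.card_pos, ← hc]
      exact Finset.card_pos.mpr (H₁.nonempty_edges _ h₁)
    · exact (Finset.singleton_nonempty x).product (H₂.nonempty_edges e₂ h₂)

end Products

/-- The square product `H₁ ■ H₂`. -/
def squareProd (H₁ : FinHypergraph V₁) (H₂ : FinHypergraph V₂) : FinHypergraph (V₁ × V₂) where
  edges := {E | ∃ e₁ ∈ H₁.edges, ∃ e₂ ∈ H₂.edges, E = e₁ ×ˢ e₂}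
  nonempty_edges := by
    rintro E ⟨e₁, h₁, e₂, h₂, rfl⟩
    exact (H₁.nonempty_edges e₁ h₁).product (H₂.nonempty_edges e₂ h₂)

/-- The 2-section of a hypergraph: distinct vertices are adjacent iff they lie
in a common edge. -/
def twoSection (H : FinHypergraph V) : SimpleGraph V where
  Adj x y := x ≠ y ∧ ∃ e ∈ H.edges, x ∈ e ∧ y ∈ e
  symm := by constructor; rintro x y ⟨hxy, e, he, hx, hy⟩; exact ⟨hxy.symm, e, he, hy, hx⟩
  loopless := by constructor; rintro x ⟨hx, -⟩; exact hx rfl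

end FinHypergraph

namespace SimpleGraph

variable {V₁ V₂ : Type*}

/-- The direct (tensor) product of simple graphs. -/
def directProd (G₁ : SimpleGraph V₁) (G₂ : SimpleGraph V₂) : SimpleGraph (V₁ × V₂) where
  Adj x y := G₁.Adj x.1 y.1 ∧ G₂.Adj x.2 y.2
  symm := ⟨fun _ _ ⟨h₁, h₂⟩ => ⟨h₁.symm, h₂.symm⟩⟩
  loopless := ⟨fun x h => G₁.irrefl h.1⟩

/-- The strong product of simple graphs. -/
def strongGraphProd (G₁ : SimpleGraph V₁) (G₂ : SimpleGraph V₂) : SimpleGraph (V₁ × V₂) where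
  Adj x y := x ≠ y ∧ ((x.1 = y.1 ∧ G₂.Adj x.2 y.2) ∨ (x.2 = y.2 ∧ G₁.Adj x.1 y.1) ∨
    (G₁.Adj x.1 y.1 ∧ G₂.Adj x.2 y.2))
  symm := by
    constructor; rintro x y ⟨hne, (⟨h, h'⟩ | ⟨h, h'⟩ | ⟨h, h'⟩)⟩
    · exact ⟨hne.symm, Or.inl ⟨h.symm, h'.symm⟩⟩
    · exact ⟨hne.symm, Or.inr (Or.inl ⟨h.symm, h'.symm⟩)⟩
    · exact ⟨hne.symm, Or.inr (Or.inr ⟨h.symm, h'.symm⟩)⟩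
  loopless := by constructor; rintro x ⟨hx, -⟩; exact hx rfl

/-- The lexicographic product of simple graphs. -/
def lexGraphProd (G₁ : SimpleGraph V₁) (G₂ : SimpleGraph V₂) : SimpleGraph (V₁ × V₂) where
  Adj x y := G₁.Adj x.1 y.1 ∨ (x.1 = y.1 ∧ G₂.Adj x.2 y.2)
  symm := by
    constructor; rintro x y (h | ⟨h, h'⟩)
    · exact Or.inl h.symm
    · exact Or.inr ⟨h.symm, h'.symm⟩
  loopless := by
    constructor; rintro x (h | ⟨-, h⟩)
    · exact G₁.irrefl h
    · exact G₂.irrefl h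

end SimpleGraph

/-!
Along every fiber `{x} × V₂` or `V₁ × {y}`, the coloring `(x, y) ↦ c₁ x + c₂ y` (colors added
modulo `max k₁ k₂`) is a translate of `c₂` or of `c₁`, i.e. a recoloring by an injective map, so
it is proper (strong) as soon as `c₁` and `c₂` are. Conversely a proper (strong) coloring of the
product restricts to one of each factor on any fiber.
-/

namespace FinHypergraph

open Function

variable {V V₁ V₂ : Type*} {k l : ℕ}

theorem IsProperColoring.comp_injective {H : FinHypergraph V} {c : V → Fin k}
    (hc : H.IsProperColoring c) {f : Fin k → Fin l} (hf : Injective f) :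
    H.IsProperColoring (f ∘ c) := by
  intro e he i hall
  obtain ⟨v, hv⟩ := H.nonempty_edges e he
  exact hc e he (c v) fun u hu => hf ((hall u hu).trans (hall v hv).symm)

theorem IsStrongColoring.comp_injective {H : FinHypergraph V} {c : V → Fin k}
    (hc : H.IsStrongColoring c) {f : Fin k → Fin l} (hf : Injective f) :
    H.IsStrongColoring (f ∘ c) :=
  ⟨hc.1.comp_injective hf, fun e he u hu v hv huv => hf.ne (hc.2 e he u hu v hv huv)⟩

theorem forall_mem_cartProd_edges {H₁ : FinHypergraph V₁} {H₂ : FinHypergraph V₂}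
    {P : Finset (V₁ × V₂) → Prop} :
    (∀ E ∈ (H₁.cartProd H₂).edges, P E) ↔
      (∀ x, ∀ f ∈ H₂.edges, P ({x} ×ˢ f)) ∧ ∀ y, ∀ e ∈ H₁.edges, P (e ×ˢ {y}) := by
  simp only [cartProd, Set.mem_ofPred_eq]
  aesop

theorem isProperColoring_cartProd_iff {H₁ : FinHypergraph V₁} {H₂ : FinHypergraph V₂}
    {c : V₁ × V₂ → Fin k} :
    (H₁.cartProd H₂).IsProperColoring c ↔
      (∀ x, H₂.IsProperColoring fun y => c (x, y)) ∧
        ∀ y, H₁.IsProperColoring fun x => c (x, y) := by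
  simp only [IsProperColoring, forall_mem_cartProd_edges, Finset.mem_product,
    Finset.mem_singleton, Prod.forall]
  aesop

theorem isStrongColoring_cartProd_iff {H₁ : FinHypergraph V₁} {H₂ : FinHypergraph V₂}
    {c : V₁ × V₂ → Fin k} :
    (H₁.cartProd H₂).IsStrongColoring c ↔
      (∀ x, H₂.IsStrongColoring fun y => c (x, y)) ∧
        ∀ y, H₁.IsStrongColoring fun x => c (x, y) := by
  simp only [IsStrongColoring, isProperColoring_cartProd_iff, forall_mem_cartProd_edges,
    Finset.singleton_product, Finset.product_singleton, Finset.forall_mem_map,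
    Embedding.coeFn_mk, ne_eq, Prod.mk.injEq, true_and, and_true, forall_and]
  tauto

def addColoring {k₁ k₂ : ℕ} (c₁ : V₁ → Fin k₁) (c₂ : V₂ → Fin k₂) :
    V₁ × V₂ → Fin (max k₁ k₂) :=
  fun p => Fin.castLE (le_max_left _ _) (c₁ p.1) + Fin.castLE (le_max_right _ _) (c₂ p.2)

section addColoring

variable {k₁ k₂ : ℕ} (c₁ : V₁ → Fin k₁) (c₂ : V₂ → Fin k₂)

theorem addColoring_left_fiber (y : V₂) :
    (fun x => addColoring c₁ c₂ (x, y)) =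
      (fun i => i + Fin.castLE (le_max_right _ _) (c₂ y)) ∘ Fin.castLE (le_max_left _ _) ∘ c₁ :=
  rfl

theorem addColoring_right_fiber (x : V₁) :
    (fun y => addColoring c₁ c₂ (x, y)) =
      (Fin.castLE (le_max_left _ _) (c₁ x) + ·) ∘ Fin.castLE (le_max_right _ _) ∘ c₂ :=
  rfl

end addColoring

theorem IsProperColoring.addColoring {H₁ : FinHypergraph V₁} {H₂ : FinHypergraph V₂}
    {k₁ k₂ : ℕ} {c₁ : V₁ → Fin k₁} {c₂ : V₂ → Fin k₂}
    (hc₁ : H₁.IsProperColoring c₁) (hc₂ : H₂.IsProperColoring c₂) :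
    (H₁.cartProd H₂).IsProperColoring (addColoring c₁ c₂) := by
  refine isProperColoring_cartProd_iff.2 ⟨fun x => ?_, fun y => ?_⟩
  · rw [addColoring_right_fiber]
    exact hc₂.comp_injective ((add_right_injective _).comp (Fin.castLE_injective _))
  · rw [addColoring_left_fiber]
    exact hc₁.comp_injective ((add_left_injective _).comp (Fin.castLE_injective _))

theorem IsStrongColoring.addColoring {H₁ : FinHypergraph V₁} {H₂ : FinHypergraph V₂}
    {k₁ k₂ : ℕ} {c₁ : V₁ → Fin k₁} {c₂ : V₂ → Fin k₂}
    (hc₁ : H₁.IsStrongColoring c₁) (hc₂ : H₂.IsStrongColoring c₂) :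
    (H₁.cartProd H₂).IsStrongColoring (addColoring c₁ c₂) := by
  refine isStrongColoring_cartProd_iff.2 ⟨fun x => ?_, fun y => ?_⟩
  · rw [addColoring_right_fiber]
    exact hc₂.comp_injective ((add_right_injective _).comp (Fin.castLE_injective _))
  · rw [addColoring_left_fiber]
    exact hc₁.comp_injective ((add_left_injective _).comp (Fin.castLE_injective _))

theorem Loopless.cartProd {H₁ : FinHypergraph V₁} {H₂ : FinHypergraph V₂}
    (h₁ : H₁.Loopless) (h₂ : H₂.Loopless) : (H₁.cartProd H₂).Loopless := by
  refine forall_mem_cartProd_edges.2 ⟨fun x f hf => ?_, fun y e he => ?_⟩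
  · simpa [Finset.card_product] using h₂ f hf
  · simpa [Finset.card_product] using h₁ e he

theorem Loopless.isStrongColoring_equivFin [Fintype V] {H : FinHypergraph V}
    (h : H.Loopless) : H.IsStrongColoring (Fintype.equivFin V) := by
  refine ⟨fun e he i hall => ?_, fun e _ u _ v _ huv => (Fintype.equivFin V).injective.ne huv⟩
  obtain ⟨u, hu, v, hv, huv⟩ := Finset.one_lt_card.mp (h e he)
  exact huv ((Fintype.equivFin V).injective ((hall u hu).trans (hall v hv).symm))

theorem IsProperColoring.chromaticNumber_le {H : FinHypergraph V} {c : V → Fin k}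
    (hc : H.IsProperColoring c) : H.chromaticNumber ≤ k :=
  Nat.sInf_le ⟨c, hc⟩

theorem IsStrongColoring.strongChromaticNumber_le {H : FinHypergraph V} {c : V → Fin k}
    (hc : H.IsStrongColoring c) : H.strongChromaticNumber ≤ k :=
  Nat.sInf_le ⟨c, hc⟩

theorem Loopless.exists_isProperColoring_chromaticNumber [Fintype V] {H : FinHypergraph V}
    (h : H.Loopless) : ∃ c : V → Fin H.chromaticNumber, H.IsProperColoring c :=
  Nat.sInf_mem (s := {k | ∃ c : V → Fin k, H.IsProperColoring c})
    ⟨_, _, h.isStrongColoring_equivFin.1⟩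

theorem Loopless.exists_isStrongColoring_strongChromaticNumber [Fintype V]
    {H : FinHypergraph V} (h : H.Loopless) :
    ∃ c : V → Fin H.strongChromaticNumber, H.IsStrongColoring c :=
  Nat.sInf_mem (s := {k | ∃ c : V → Fin k, H.IsStrongColoring c})
    ⟨_, _, h.isStrongColoring_equivFin⟩

end FinHypergraph

/-- chromatic number and strong chromatic number of the Cartesian product of
loopless hypergraphs are the maxima of those of the factors. -/
theorem chromaticNumber_cartProd {V₁ V₂ : Type*} [Fintype V₁] [Nonempty V₁]
    [Fintype V₂] [Nonempty V₂] (H₁ : FinHypergraph V₁) (H₂ : FinHypergraph V₂)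
    (h₁ : H₁.Loopless) (h₂ : H₂.Loopless) :
    (H₁.cartProd H₂).chromaticNumber = max H₁.chromaticNumber H₂.chromaticNumber ∧
      (H₁.cartProd H₂).strongChromaticNumber =
        max H₁.strongChromaticNumber H₂.strongChromaticNumber := by
  obtain ⟨x₀⟩ := ‹Nonempty V₁›
  obtain ⟨y₀⟩ := ‹Nonempty V₂›
  have h := h₁.cartProd h₂
  refine ⟨le_antisymm ?_ ?_, le_antisymm ?_ ?_⟩
  · obtain ⟨c₁, hc₁⟩ := h₁.exists_isProperColoring_chromaticNumber
    obtain ⟨c₂, hc₂⟩ := h₂.exists_isProperColoring_chromaticNumber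
    exact (hc₁.addColoring hc₂).chromaticNumber_le
  · obtain ⟨c, hc⟩ := h.exists_isProperColoring_chromaticNumber
    obtain ⟨hc₂, hc₁⟩ := FinHypergraph.isProperColoring_cartProd_iff.1 hc
    exact max_le (hc₁ y₀).chromaticNumber_le (hc₂ x₀).chromaticNumber_le
  · obtain ⟨c₁, hc₁⟩ := h₁.exists_isStrongColoring_strongChromaticNumber
    obtain ⟨c₂, hc₂⟩ := h₂.exists_isStrongColoring_strongChromaticNumber
    exact (hc₁.addColoring hc₂).strongChromaticNumber_le
  · obtain ⟨c, hc⟩ := h.exists_isStrongColoring_strongChromaticNumber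
    obtain ⟨hc₂, hc₁⟩ := FinHypergraph.isStrongColoring_cartProd_iff.1 hc
    exact max_le (hc₁ y₀).strongChromaticNumber_le (hc₂ x₀).strongChromaticNumber_le
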